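/- arXiv:1101.0169 — 3 statements merged into one kernel-verified Lean document; each statement's English description precedes it below -/
import Mathlib

section
/- Let n ≥ 2 and let E ∈ Sⁿ with |E| = |B| = ωₙ. Then for every x ∈ ℝⁿ and every F ∈ Sⁿ such that E △ F is compactly contained in the ball B(x, 1/2), one has |α(E) − α(F)| ≤ (2^{n+2} / ((2ⁿ − 1) ωₙ)) · |E △ F|. -/
open MeasureTheory Metric Set Filter Topology
open scoped Pointwise symmDiff ENNReal RealInnerProductSpace NNReal

noncomputable section

/-- Euclidean space `ℝⁿ`. -/
abbrev En (n : ℕ) : Type := EuclideanSpace ℝ (Fin n)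

/-- The open unit ball `B = B(0,1)`. -/
def unitB (n : ℕ) : Set (En n) := ball 0 1

/-- The class `Sⁿ` of Borel sets with positive and finite Lebesgue measure. -/
def Sn {n : ℕ} (E : Set (En n)) : Prop :=
  MeasurableSet E ∧ 0 < volume E ∧ volume E < ⊤

/-- Divergence of a vector field. -/
def divg {n : ℕ} (g : En n → En n) (x : En n) : ℝ :=
  ∑ i, ⟪fderiv ℝ g x (EuclideanSpace.single i (1 : ℝ)), EuclideanSpace.single i (1 : ℝ)⟫

/-- De Giorgi perimeter of `E` relative to an open set `Ω`. -/
def relPerimeter {n : ℕ} (E Ω : Set (En n)) : ℝ :=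
  sSup { p : ℝ | ∃ g : En n → En n, ContDiff ℝ 1 g ∧ HasCompactSupport g ∧
    tsupport g ⊆ Ω ∧ (∀ x, ‖g x‖ ≤ 1) ∧ p = ∫ x in E, divg g x }

/-- De Giorgi perimeter of `E`. -/
def perimeter {n : ℕ} (E : Set (En n)) : ℝ := relPerimeter E univ

/-- Radius of the ball `B_E` centered at `0` with the same volume as `E`. -/
def ballRadius {n : ℕ} (E : Set (En n)) : ℝ :=
  ((volume E).toReal / (volume (unitB n)).toReal) ^ ((n : ℝ)⁻¹)

/-- The ball `B_E` centered at `0` with `|B_E| = |E|`. -/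
def ballOf {n : ℕ} (E : Set (En n)) : Set (En n) := ball 0 (ballRadius E)

/-- Fraenkel asymmetry `α(E)`. -/
def asym {n : ℕ} (E : Set (En n)) : ℝ :=
  ⨅ x : En n, (volume (E ∆ (x +ᵥ ballOf E))).toReal / (volume (ballOf E)).toReal

/-- Isoperimetric deficit `δP(E)`. -/
def deficit {n : ℕ} (E : Set (En n)) : ℝ :=
  (perimeter E - perimeter (ballOf E)) / perimeter (ballOf E)

/-- `E` is a (strong) `Λ`-minimizer of the perimeter at scale `R`, i.e. `E ∈ QM(R,Λ)`. -/
def QMin {n : ℕ} (R Λ : ℝ) (E : Set (En n)) : Prop :=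
  ∀ x : En n, ∀ r : ℝ, 0 < r → r < R → ∀ F : Set (En n), MeasurableSet F →
    (∃ K : Set (En n), IsCompact K ∧ E ∆ F ⊆ K ∧ K ⊆ ball x r) →
    relPerimeter E (ball x r) ≤ relPerimeter F (ball x r) + Λ * (volume (E ∆ F)).toReal

/-- The quotient `(δP(E) + f(α(E))) / g(α(E))`. -/
def Fpos {n : ℕ} (f g : ℝ → ℝ) (E : Set (En n)) : ℝ :=
  (deficit E + f (asym E)) / g (asym E)

/-- The functional `F_{f,g}`, with value defined by relaxation when `α(E) = 0`. -/
def Ffg {n : ℕ} (f g : ℝ → ℝ) (E : Set (En n)) : EReal :=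
  if 0 < asym E then ((Fpos f g E : ℝ) : EReal)
  else sInf { c : EReal | ∃ Eh : ℕ → Set (En n), (∀ h, Sn (Eh h) ∧ 0 < asym (Eh h)) ∧
    Tendsto (fun h => volume (Eh h ∆ unitB n)) atTop (nhds 0) ∧
    c = Filter.liminf (fun h => ((Fpos f g (Eh h) : ℝ) : EReal)) atTop }

/-- Relaxed value at the ball of a functional `q`, along sequences of unit-volume sets with
positive asymmetry converging to `B` in measure. -/
def QBof {n : ℕ} (q : Set (En n) → ℝ) : EReal :=
  sInf { c : EReal | ∃ F : ℕ → Set (En n),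
    (∀ k, Sn (F k) ∧ volume (F k) = volume (unitB n) ∧ 0 < asym (F k)) ∧
    Tendsto (fun k => volume (F k ∆ unitB n)) atTop (nhds 0) ∧
    c = Filter.liminf (fun k => ((q (F k) : ℝ) : EReal)) atTop }

/-- The quantitative isoperimetric quotient of order `m`, on sets of positive asymmetry. -/
def Qpos (n : ℕ) : ℕ → Set (En n) → ℝ
  | 0 => fun _ => 0
  | 1 => fun E => deficit E / asym E
  | (m + 2) => fun E => (Qpos n (m + 1) E - (QBof (Qpos n (m + 1))).toReal) / asym E

/-- The value `Q^(m)(B)` (as an extended real number). -/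
def QB (n : ℕ) (m : ℕ) : EReal := QBof (Qpos n m)

/-- The functional `Q^(m)` on all of `Sⁿ` (with value `Q^(m)(B)` when `α(E) = 0`). -/
def Qfull {n : ℕ} (m : ℕ) (E : Set (En n)) : EReal :=
  if 0 < asym E then ((Qpos n m E : ℝ) : EReal) else QB n m

/-- The penalized functional `Q^(m)_j` (with penalization parameter `aj = α^(m)_j`),
on sets of positive asymmetry. -/
def Qpen {n : ℕ} (m : ℕ) (aj : ℝ) (E : Set (En n)) : ℝ :=
  Qpos n m E + (asym E / aj - 1) ^ 2 / asym E

/-- The penalized functional `Q^(m)_j` on all of `Sⁿ`, with relaxed value when `α(E) = 0`. -/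
def QpenFull {n : ℕ} (m : ℕ) (aj : ℝ) (E : Set (En n)) : EReal :=
  if 0 < asym E then ((Qpen m aj E : ℝ) : EReal)
  else sInf { c : EReal | ∃ F : ℕ → Set (En n), (∀ k, Sn (F k) ∧ 0 < asym (F k)) ∧
    Tendsto (fun k => volume (F k ∆ unitB n)) atTop (nhds 0) ∧
    c = Filter.liminf (fun k => ((Qpen m aj (F k) : ℝ) : EReal)) atTop }

/-- Derivative `ψ'_m` of the polynomial `ψ_m(α) = Σ_{i=1}^{m-1} Q^(i)(B) αⁱ`. -/
def psiDeriv (n : ℕ) (m : ℕ) (a : ℝ) : ℝ :=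
  ∑ i ∈ Finset.Icc 1 (m - 1), (i : ℝ) * (QB n i).toReal * a ^ (i - 1)

/-- `ν` is the generalized inner normal of `E` at `x` (De Giorgi normal, characterized by
blow-up convergence in measure to the half space with inner normal `ν`). -/
def hasGenInnerNormal {n : ℕ} (E : Set (En n)) (x ν : En n) : Prop :=
  ‖ν‖ = 1 ∧ ∀ R : ℝ, 0 < R → Tendsto
    (fun r : ℝ => volume ((((fun y => r⁻¹ • (y - x)) '' E) ∆ {y : En n | 0 ≤ ⟪y, ν⟫}) ∩ ball 0 R))
    (nhdsWithin 0 (Ioi 0)) (nhds 0)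

/-- The reduced boundary `∂*E`. -/
def reducedBoundary {n : ℕ} (E : Set (En n)) : Set (En n) :=
  { x | x ∈ frontier E ∧ ∃ ν, hasGenInnerNormal E x ν }

/-- The generalized inner normal vector field of `E` (zero where it is not defined). -/
def genNormal {n : ℕ} (E : Set (En n)) (x : En n) : En n :=
  haveI := Classical.propDecidable (∃ ν, hasGenInnerNormal E x ν)
  if h : ∃ ν, hasGenInnerNormal E x ν then h.choose else 0

/-- The `(n-1)`-dimensional Hausdorff measure `H^{n-1}`. -/
def surfMeasure (n : ℕ) : Measure (En n) := Measure.hausdorffMeasure ((n : ℝ) - 1)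

/-- `S` is (locally) a hypersurface of class `C¹`. -/
def IsC1Hypersurface {n : ℕ} (S : Set (En n)) : Prop :=
  ∀ x ∈ S, ∃ r : ℝ, 0 < r ∧ ∃ F : En n → ℝ,
    ContDiffOn ℝ 1 F (ball x r) ∧ (∀ y ∈ ball x r, fderiv ℝ F y ≠ 0) ∧
    S ∩ ball x r = { y ∈ ball x r | F y = 0 }

/-- `S` is (locally) a hypersurface of class `C^{1,η}`: a level set of a `C¹` function with
nonvanishing, `η`-Hölder continuous differential. -/
def IsC1HolderHypersurface {n : ℕ} (η : ℝ) (S : Set (En n)) : Prop :=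
  ∀ x ∈ S, ∃ r : ℝ, 0 < r ∧ ∃ F : En n → ℝ, ∃ C : ℝ≥0,
    ContDiffOn ℝ 1 F (ball x r) ∧
    HolderOnWith C (Real.toNNReal η) (fderiv ℝ F) (ball x r) ∧
    (∀ y ∈ ball x r, fderiv ℝ F y ≠ 0) ∧
    S ∩ ball x r = { y ∈ ball x r | F y = 0 }

/-- `H` is a scalar (distributional) mean curvature of `∂*E`, with orientation induced by the
generalized inner normal: the tangential divergence theorem holds against every compactly
supported `C¹` vector field. -/
def IsMeanCurvature {n : ℕ} (E : Set (En n)) (H : En n → ℝ) : Prop :=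
  ∀ X : En n → En n, ContDiff ℝ 1 X → HasCompactSupport X →
    ∫ x in reducedBoundary E,
        (divg X x - ⟪fderiv ℝ X x (genNormal E x), genNormal E x⟫) ∂(surfMeasure n) =
      ((n : ℝ) - 1) * ∫ x in reducedBoundary E, H x * ⟪X x, genNormal E x⟫ ∂(surfMeasure n)

/-- `A` is a (nonempty, connected) arc of a circle of curvature `h`. -/
def IsArcOfCurvature (h : ℝ) (A : Set (En 2)) : Prop :=
  ∃ c : En 2, A ⊆ sphere c (1 / h) ∧ IsConnected A

/-- The class `P(k)`: `|E| = |B|`, `∂E` of class `C¹`, `∂E ∖ B` a union of `k` congruent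
circular arcs of curvature `h₁ > 1` and `∂E ∩ B` a union of `k` congruent circular arcs of
curvature `h₂ < 1`.  Members of `P(2)` are called ovals. -/
def ClassP (k : ℕ) (E : Set (En 2)) : Prop :=
  Sn E ∧ volume E = volume (unitB 2) ∧ IsC1Hypersurface (frontier E) ∧
  ∃ h₁ h₂ : ℝ, 0 < h₂ ∧ h₂ < 1 ∧ 1 < h₁ ∧
    (∃ A : Fin k → Set (En 2), (frontier E \ unitB 2 = ⋃ i, A i) ∧
      (∀ i, IsArcOfCurvature h₁ (A i)) ∧
      (∀ i j, ∃ f : En 2 ≃ᵢ En 2, f '' A i = A j)) ∧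
    (∃ A : Fin k → Set (En 2), (frontier E ∩ unitB 2 = ⋃ i, A i) ∧
      (∀ i, IsArcOfCurvature h₂ (A i)) ∧
      (∀ i j, ∃ f : En 2 ≃ᵢ En 2, f '' A i = A j))

/-- `x` is an optimal center for `E`, i.e. it realizes the Fraenkel asymmetry. -/
def IsOptimalCenter {n : ℕ} (E : Set (En n)) (x : En n) : Prop :=
  (volume (E ∆ (x +ᵥ ballOf E))).toReal / (volume (ballOf E)).toReal = asym E

/-- Bonnesen annular symmetrization of `E ⊆ ℝ²` with respect to the origin and the first
coordinate axis: on each circle `∂B(0,r)` it consists of the two opposite arcs, centered on the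
axis, of total length `H¹(E ∩ ∂B(0,r))`. -/
def annularSym (E : Set (En 2)) : Set (En 2) :=
  { p | p ≠ 0 ∧
    (InnerProductGeometry.angle p (EuclideanSpace.single 0 (1 : ℝ)) ≤
        (Measure.hausdorffMeasure 1 (E ∩ sphere (0 : En 2) ‖p‖)).toReal / (4 * ‖p‖) ∨
      InnerProductGeometry.angle p (-(EuclideanSpace.single 0 (1 : ℝ))) ≤
        (Measure.hausdorffMeasure 1 (E ∩ sphere (0 : En 2) ‖p‖)).toReal / (4 * ‖p‖)) }

namespace AuxAsym

variable {n : ℕ}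

lemma vol_unitB_pos (n : ℕ) : 0 < volume (unitB n) :=
  measure_ball_pos _ _ one_pos

lemma vol_unitB_ne_top (n : ℕ) : volume (unitB n) ≠ ⊤ := measure_ball_lt_top.ne

lemma vol_ball_zero (hn : 1 ≤ n) (x : En n) (r : ℝ) (hr : 0 ≤ r) :
    volume (ball x r) = ENNReal.ofReal (r ^ n) * volume (unitB n) := by
  haveI : NeZero n := ⟨by omega⟩
  rw [show unitB n = ball (0 : En n) 1 from rfl,
    Measure.addHaar_ball volume x hr, finrank_euclideanSpace_fin]

lemma vol_ballOf (hn : 1 ≤ n) {E : Set (En n)} (hE : Sn E) :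
    volume (ballOf E) = volume E := by
  have hb0 : (0:ℝ) < (volume (unitB n)).toReal :=
    ENNReal.toReal_pos (vol_unitB_pos n).ne' (vol_unitB_ne_top n)
  have hE0 : (0:ℝ) < (volume E).toReal := ENNReal.toReal_pos hE.2.1.ne' hE.2.2.ne
  have hr : 0 ≤ ballRadius E := Real.rpow_nonneg (by positivity) _
  rw [ballOf, vol_ball_zero hn _ _ hr]
  have hpow : (ballRadius E) ^ n = (volume E).toReal / (volume (unitB n)).toReal := by
    rw [← Real.rpow_natCast (ballRadius E) n, ballRadius,
      ← Real.rpow_mul (by positivity),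
      inv_mul_cancel₀ (by exact_mod_cast (by omega : n ≠ 0)), Real.rpow_one]
  rw [hpow, ENNReal.ofReal_div_of_pos hb0, ENNReal.ofReal_toReal hE.2.2.ne,
    ENNReal.ofReal_toReal (vol_unitB_ne_top n),
    ENNReal.div_mul_cancel (vol_unitB_pos n).ne' (vol_unitB_ne_top n)]

lemma subset_union_symmDiff' (E F : Set (En n)) : F ⊆ E ∪ (E ∆ F) := by
  intro z hz
  by_cases hzE : z ∈ E
  · exact Or.inl hzE
  · exact Or.inr (Or.inr ⟨hz, hzE⟩)

lemma vol_le_vol_add_symmDiff (E F : Set (En n)) :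
    volume F ≤ volume E + volume (E ∆ F) :=
  (measure_mono (subset_union_symmDiff' E F)).trans (measure_union_le _ _)

lemma vol_symmDiff_ne_top {E F : Set (En n)} (hE : volume E ≠ ⊤) (hF : volume F ≠ ⊤) :
    volume (E ∆ F) ≠ ⊤ := by
  refine ((measure_mono symmDiff_subset_union).trans_lt ?_).ne
  exact (measure_union_le E F).trans_lt
    (by rw [ENNReal.add_lt_top]; exact ⟨hE.lt_top, hF.lt_top⟩)

lemma vol_vadd (y : En n) (s : Set (En n)) : volume (y +ᵥ s) = volume s := by
  have := measure_vadd (α := En n) (G := En n) (μ := volume) y s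
  exact this

lemma vadd_symmDiff (y : En n) (s t : Set (En n)) :
    (y +ᵥ s) ∆ (y +ᵥ t) = y +ᵥ (s ∆ t) := by
  simp only [← Set.image_vadd]
  exact (Set.image_symmDiff (add_right_injective y) s t).symm

lemma vol_ballOf_symmDiff_aux (hn : 1 ≤ n) {E F : Set (En n)} (hE : Sn E) (hF : Sn F)
    (h : ballRadius E ≤ ballRadius F) :
    volume (ballOf E ∆ ballOf F) ≤ volume (E ∆ F) := by
  have hsub : ballOf E ⊆ ballOf F := ball_subset_ball h
  rw [symmDiff_of_le hsub, measure_diff hsub measurableSet_ball.nullMeasurableSet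
    (by rw [vol_ballOf hn hE]; exact hE.2.2.ne), vol_ballOf hn hE, vol_ballOf hn hF]
  refine tsub_le_iff_right.mpr ?_
  rw [add_comm]
  exact vol_le_vol_add_symmDiff E F

lemma vol_ballOf_symmDiff (hn : 1 ≤ n) {E F : Set (En n)} (hE : Sn E) (hF : Sn F) :
    volume (ballOf E ∆ ballOf F) ≤ volume (E ∆ F) := by
  rcases le_total (ballRadius E) (ballRadius F) with h | h
  · exact vol_ballOf_symmDiff_aux hn hE hF h
  · calc volume (ballOf E ∆ ballOf F) = volume (ballOf F ∆ ballOf E) := by rw [symmDiff_comm]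
      _ ≤ volume (F ∆ E) := vol_ballOf_symmDiff_aux hn hF hE h
      _ = volume (E ∆ F) := by rw [symmDiff_comm]

lemma asym_bddBelow (E : Set (En n)) : BddBelow (Set.range fun y : En n =>
    (volume (E ∆ (y +ᵥ ballOf E))).toReal / (volume (ballOf E)).toReal) :=
  ⟨0, by rintro _ ⟨y, rfl⟩; positivity⟩

lemma asym_le (E : Set (En n)) (y : En n) :
    asym E ≤ (volume (E ∆ (y +ᵥ ballOf E))).toReal / (volume (ballOf E)).toReal :=
  ciInf_le (asym_bddBelow E) y

lemma asym_nonneg (E : Set (En n)) : 0 ≤ asym E :=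
  le_ciInf fun _ => by positivity

lemma asym_le_two (hn : 1 ≤ n) {E : Set (En n)} (hE : Sn E) : asym E ≤ 2 := by
  have hvfin : volume (ballOf E) ≠ ⊤ := by rw [vol_ballOf hn hE]; exact hE.2.2.ne
  have hv : 0 < (volume (ballOf E)).toReal := by
    rw [vol_ballOf hn hE]; exact ENNReal.toReal_pos hE.2.1.ne' hE.2.2.ne
  refine (asym_le E 0).trans ?_
  rw [div_le_iff₀ hv]
  have h1 : volume (E ∆ ((0 : En n) +ᵥ ballOf E)) ≤ volume (ballOf E) + volume (ballOf E) := by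
    calc volume (E ∆ ((0 : En n) +ᵥ ballOf E)) ≤ volume (E ∪ ((0 : En n) +ᵥ ballOf E)) :=
          measure_mono symmDiff_subset_union
      _ ≤ volume E + volume ((0 : En n) +ᵥ ballOf E) := measure_union_le _ _
      _ = volume (ballOf E) + volume (ballOf E) := by rw [vol_vadd, vol_ballOf hn hE]
  have h2 := ENNReal.toReal_mono (by exact ENNReal.add_ne_top.mpr ⟨hvfin, hvfin⟩) h1
  rw [ENNReal.toReal_add hvfin hvfin] at h2
  linarith

lemma asym_mul_le (hn : 1 ≤ n) {E F : Set (En n)} (hE : Sn E) (hF : Sn F) :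
    asym E * (volume E).toReal ≤
      asym F * (volume F).toReal + 2 * (volume (E ∆ F)).toReal := by
  set m := (volume (E ∆ F)).toReal with hmdef
  have hmfin : volume (E ∆ F) ≠ ⊤ := vol_symmDiff_ne_top hE.2.2.ne hF.2.2.ne
  have hvE : 0 < (volume E).toReal := ENNReal.toReal_pos hE.2.1.ne' hE.2.2.ne
  have hvF : 0 < (volume F).toReal := ENNReal.toReal_pos hF.2.1.ne' hF.2.2.ne
  have hBE : (volume (ballOf E)).toReal = (volume E).toReal := by rw [vol_ballOf hn hE]
  have hBF : (volume (ballOf F)).toReal = (volume F).toReal := by rw [vol_ballOf hn hF]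
  have hBFfin : volume (ballOf F) ≠ ⊤ := by rw [vol_ballOf hn hF]; exact hF.2.2.ne
  have key : ∀ y : En n, (volume (E ∆ (y +ᵥ ballOf E))).toReal ≤
      (volume (F ∆ (y +ᵥ ballOf F))).toReal + 2 * m := by
    intro y
    have hFfin : volume (F ∆ (y +ᵥ ballOf F)) ≠ ⊤ := by
      apply vol_symmDiff_ne_top hF.2.2.ne
      rw [vol_vadd]; exact hBFfin
    have t3 : volume ((y +ᵥ ballOf F) ∆ (y +ᵥ ballOf E)) ≤ volume (E ∆ F) := by
      rw [vadd_symmDiff, vol_vadd, symmDiff_comm]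
      exact vol_ballOf_symmDiff hn hE hF
    have step : volume (E ∆ (y +ᵥ ballOf E)) ≤
        volume (F ∆ (y +ᵥ ballOf F)) + (volume (E ∆ F) + volume (E ∆ F)) := by
      calc volume (E ∆ (y +ᵥ ballOf E))
          ≤ volume ((E ∆ F) ∪ (F ∆ (y +ᵥ ballOf E))) :=
            measure_mono (symmDiff_triangle E F _)
        _ ≤ volume (E ∆ F) + volume (F ∆ (y +ᵥ ballOf E)) := measure_union_le _ _
        _ ≤ volume (E ∆ F) + (volume (F ∆ (y +ᵥ ballOf F)) +
              volume ((y +ᵥ ballOf F) ∆ (y +ᵥ ballOf E))) := by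
            refine add_le_add_right ?_ _
            exact (measure_mono (symmDiff_triangle F (y +ᵥ ballOf F) _)).trans
              (measure_union_le _ _)
        _ ≤ volume (E ∆ F) + (volume (F ∆ (y +ᵥ ballOf F)) + volume (E ∆ F)) := by
            exact add_le_add_right (add_le_add_right t3 _) _
        _ = volume (F ∆ (y +ᵥ ballOf F)) + (volume (E ∆ F) + volume (E ∆ F)) := by
            ring
    have hrhs : volume (F ∆ (y +ᵥ ballOf F)) + (volume (E ∆ F) + volume (E ∆ F)) ≠ ⊤ :=
      ENNReal.add_ne_top.mpr ⟨hFfin, ENNReal.add_ne_top.mpr ⟨hmfin, hmfin⟩⟩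
    have h2 := ENNReal.toReal_mono hrhs step
    rw [ENNReal.toReal_add hFfin (ENNReal.add_ne_top.mpr ⟨hmfin, hmfin⟩),
      ENNReal.toReal_add hmfin hmfin] at h2
    linarith
  have h1 : ∀ y : En n, asym E * (volume E).toReal ≤
      (volume (F ∆ (y +ᵥ ballOf F))).toReal + 2 * m := by
    intro y
    have hle := asym_le E y
    rw [hBE] at hle
    exact ((le_div_iff₀ hvE).mp hle).trans (key y)
  have h2 : (asym E * (volume E).toReal - 2 * m) / (volume F).toReal ≤ asym F := by
    refine le_ciInf fun y => ?_
    rw [hBF]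
    exact (div_le_div_iff_of_pos_right hvF).mpr (by linarith [h1 y])
  have h3 := (div_le_iff₀ hvF).mp h2
  linarith

end AuxAsym

/-- Estimate of the difference of asymmetries by the volume of the symmetric difference. -/
theorem abs_asym_sub_asym_le (n : ℕ) (hn : 2 ≤ n) (E F : Set (En n)) (hE : Sn E) (hF : Sn F)
    (hvol : volume E = volume (unitB n)) (x : En n)
    (hEF : ∃ K : Set (En n), IsCompact K ∧ E ∆ F ⊆ K ∧ K ⊆ ball x (1 / 2)) :
    |asym E - asym F| ≤
      (2 : ℝ) ^ (n + 2) / (((2 : ℝ) ^ n - 1) * (volume (unitB n)).toReal) *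
        (volume (E ∆ F)).toReal := by
  classical
  have hn1 : 1 ≤ n := by omega
  obtain ⟨K, hK, hEFK, hKball⟩ := hEF
  set v := (volume (unitB n)).toReal with hvdef
  set m := (volume (E ∆ F)).toReal with hmdef
  set a := asym E with hadef
  set b := asym F with hbdef
  set vF := (volume F).toReal with hvFdef
  have hmfin : volume (E ∆ F) ≠ ⊤ := AuxAsym.vol_symmDiff_ne_top hE.2.2.ne hF.2.2.ne
  have hv0 : 0 < v :=
    ENNReal.toReal_pos (AuxAsym.vol_unitB_pos n).ne' (AuxAsym.vol_unitB_ne_top n)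
  have hvF0 : 0 < vF := ENNReal.toReal_pos hF.2.1.ne' hF.2.2.ne
  have hm0 : 0 ≤ m := ENNReal.toReal_nonneg
  have ha0 : 0 ≤ a := AuxAsym.asym_nonneg E
  have hb0 : 0 ≤ b := AuxAsym.asym_nonneg F
  have ha2 : a ≤ 2 := AuxAsym.asym_le_two hn1 hE
  have hb2 : b ≤ 2 := AuxAsym.asym_le_two hn1 hF
  have hA : a * v ≤ b * vF + 2 * m := by
    have h := AuxAsym.asym_mul_le hn1 hE hF
    rw [hvol] at h
    exact h
  have hB : b * vF ≤ a * v + 2 * m := by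
    have h := AuxAsym.asym_mul_le hn1 hF hE
    rw [hvol, symmDiff_comm F E] at h
    exact h
  have hFle : vF ≤ v + m := by
    have h := ENNReal.toReal_mono
      (ENNReal.add_ne_top.mpr ⟨hE.2.2.ne, hmfin⟩) (AuxAsym.vol_le_vol_add_symmDiff E F)
    rw [ENNReal.toReal_add hE.2.2.ne hmfin, hvol] at h
    exact h
  have hEle : v ≤ vF + m := by
    have h := ENNReal.toReal_mono
      (ENNReal.add_ne_top.mpr ⟨hF.2.2.ne, AuxAsym.vol_symmDiff_ne_top hF.2.2.ne hE.2.2.ne⟩)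
      (AuxAsym.vol_le_vol_add_symmDiff F E)
    rw [ENNReal.toReal_add hF.2.2.ne (AuxAsym.vol_symmDiff_ne_top hF.2.2.ne hE.2.2.ne),
      symmDiff_comm F E, hvol] at h
    exact h
  have hmv : m ≤ (1/2 : ℝ) ^ n * v := by
    have hmb : volume (E ∆ F) ≤ volume (ball x (1/2 : ℝ)) :=
      measure_mono (hEFK.trans hKball)
    rw [AuxAsym.vol_ball_zero hn1 x _ (by norm_num)] at hmb
    have h := ENNReal.toReal_mono
      (ENNReal.mul_ne_top ENNReal.ofReal_ne_top (AuxAsym.vol_unitB_ne_top n)) hmb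
    rw [ENNReal.toReal_mul, ENNReal.toReal_ofReal (by positivity)] at h
    exact h
  set P := (2:ℝ) ^ n with hPdef
  have hP4 : 4 ≤ P := by
    calc (4:ℝ) = 2 ^ 2 := by norm_num
      _ ≤ 2 ^ n := pow_le_pow_right₀ (by norm_num) hn
  have hPm : P * m ≤ v := by
    have hPh : P * (1/2 : ℝ) ^ n = 1 := by rw [hPdef, ← mul_pow]; norm_num
    calc P * m ≤ P * ((1/2 : ℝ) ^ n * v) :=
          mul_le_mul_of_nonneg_left hmv (by positivity)
      _ = (P * (1/2 : ℝ) ^ n) * v := by ring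
      _ = v := by rw [hPh, one_mul]
  have h2n2 : (2:ℝ) ^ (n + 2) = 4 * P := by rw [pow_add, hPdef]; ring
  have hden : 0 < (P - 1) * v := by nlinarith
  have hkey1 : (a - b) * v ≤ 4 * m := by
    nlinarith [mul_le_mul_of_nonneg_left (show vF - v ≤ m by linarith) hb0,
      mul_le_mul_of_nonneg_right hb2 hm0]
  have hkey2 : (b - a) * vF ≤ 4 * m := by
    nlinarith [mul_le_mul_of_nonneg_left (show v - vF ≤ m by linarith) ha0,
      mul_le_mul_of_nonneg_right ha2 hm0]
  rw [abs_sub_le_iff]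
  constructor
  · rw [div_mul_eq_mul_div, le_div_iff₀ hden, h2n2]
    nlinarith [mul_le_mul_of_nonneg_right hkey1 (show (0:ℝ) ≤ P - 1 by linarith), hm0]
  · rw [div_mul_eq_mul_div, le_div_iff₀ hden, h2n2]
    have hPvF : (P - 1) * v ≤ P * vF := by
      nlinarith [mul_le_mul_of_nonneg_left (show v - m ≤ vF by linarith)
        (show (0:ℝ) ≤ P by linarith)]
    rcases le_total b a with h | h
    · nlinarith
    · calc (b - a) * ((P - 1) * v) ≤ (b - a) * (P * vF) :=
            mul_le_mul_of_nonneg_left hPvF (by linarith)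
        _ = P * ((b - a) * vF) := by ring
        _ ≤ P * (4 * m) := mul_le_mul_of_nonneg_left hkey2 (by linarith)
        _ = 4 * P * m := by ring


end
end

section
/- Let m ≥ 2, assume Q^(k)(B) ∈ ℝ for all k = 1, …, m−1, and assume Q^(m)(B) > −∞. Then there exists λ_m ∈ ℝ such that Q^(m)(E) ≥ λ_m for all E ∈ Sⁿ. -/
open MeasureTheory Metric Set Filter Topology
open scoped Pointwise symmDiff ENNReal RealInnerProductSpace NNReal

noncomputable section

section Aux

variable {n : ℕ}

lemma vadd_smul_image (v : En n) (c : ℝ) (A : Set (En n)) :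
    v +ᵥ c • A = (fun y => v + c • y) '' A := by
  rw [← Set.image_smul, ← Set.image_vadd, Set.image_image]
  rfl

lemma psi_preimage {c : ℝ} (hc : c ≠ 0) (v : En n) (A : Set (En n)) :
    (fun x => c⁻¹ • (x - v)) ⁻¹' A = v +ᵥ c • A := by
  rw [vadd_smul_image]
  ext x
  simp only [Set.mem_preimage, Set.mem_image]
  constructor
  · intro hx
    exact ⟨c⁻¹ • (x - v), hx, by rw [smul_inv_smul₀ hc, add_sub_cancel]⟩
  · rintro ⟨a, ha, rfl⟩
    simpa [inv_smul_smul₀ hc] using ha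

lemma vol_affine (c : ℝ) (v : En n) (A : Set (En n)) :
    volume (v +ᵥ c • A) = ENNReal.ofReal (|c| ^ n) * volume A := by
  rw [measure_vadd, Measure.addHaar_smul, finrank_euclideanSpace_fin, abs_pow]

lemma map_psi {c : ℝ} (hc : 0 < c) (v : En n) :
    Measure.map (fun x => c⁻¹ • (x - v)) (volume : Measure (En n)) =
      ENNReal.ofReal (c ^ n) • volume := by
  have hψm : Measurable fun x : En n => c⁻¹ • (x - v) :=
    (continuous_id.sub continuous_const).const_smul c⁻¹ |>.measurable
  refine Measure.ext fun A hA => ?_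
  rw [Measure.map_apply hψm hA, psi_preimage hc.ne' v A, Measure.smul_apply, vol_affine,
    abs_of_pos hc, smul_eq_mul]

lemma setIntegral_comp_affine {c : ℝ} (hc : 0 < c) (v : En n) {E : Set (En n)}
    (hE : MeasurableSet E) {h : En n → ℝ} (hh : Continuous h) :
    ∫ x in (v +ᵥ c • E), h (c⁻¹ • (x - v)) = c ^ n * ∫ x in E, h x := by
  have hψm : Measurable fun x : En n => c⁻¹ • (x - v) :=
    (continuous_id.sub continuous_const).const_smul c⁻¹ |>.measurable
  rw [← psi_preimage hc.ne' v E,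
    ← MeasureTheory.setIntegral_map hE hh.aestronglyMeasurable hψm.aemeasurable,
    map_psi hc v, Measure.restrict_smul, integral_smul_measure,
    ENNReal.toReal_ofReal (pow_nonneg hc.le n), smul_eq_mul]

end Aux
section Aux2

variable {n : ℕ}

lemma continuous_divg {g : En n → En n} (hg : ContDiff ℝ 1 g) : Continuous (divg g) := by
  unfold divg
  refine continuous_finset_sum _ fun i _ => ?_
  exact Continuous.inner
    ((ContinuousLinearMap.apply ℝ (En n) (EuclideanSpace.single i (1:ℝ))).continuous.comp
      (hg.continuous_fderiv one_ne_zero)) continuous_const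

lemma divg_comp_affine {g : En n → En n} (hg : ContDiff ℝ 1 g) {c : ℝ} (hc : c ≠ 0)
    (v x : En n) :
    divg (fun y => g (c⁻¹ • (y - v))) x = c⁻¹ * divg g (c⁻¹ • (x - v)) := by
  have hψ : HasFDerivAt (fun y : En n => c⁻¹ • (y - v))
      (c⁻¹ • ContinuousLinearMap.id ℝ (En n)) x :=
    ((hasFDerivAt_id x).sub_const v).const_smul c⁻¹
  have hgd := (hg.differentiable one_ne_zero (c⁻¹ • (x - v))).hasFDerivAt
  have hcomp : HasFDerivAt (fun y => g (c⁻¹ • (y - v)))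
      ((fderiv ℝ g (c⁻¹ • (x - v))).comp (c⁻¹ • ContinuousLinearMap.id ℝ (En n))) x :=
    hgd.comp x hψ
  unfold divg
  rw [hcomp.fderiv, Finset.mul_sum]
  refine Finset.sum_congr rfl fun i _ => ?_
  rw [ContinuousLinearMap.comp_apply, ContinuousLinearMap.smul_apply,
    ContinuousLinearMap.id_apply, ContinuousLinearMap.map_smul, real_inner_smul_left]

lemma divg_zero (x : En n) : divg (fun _ => (0 : En n)) x = 0 := by
  unfold divg
  simp [fderiv_const]

lemma perimeter_nonneg (E : Set (En n)) : 0 ≤ perimeter E := by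
  have h0 : (0:ℝ) ∈ { p : ℝ | ∃ g : En n → En n, ContDiff ℝ 1 g ∧ HasCompactSupport g ∧
      tsupport g ⊆ univ ∧ (∀ x, ‖g x‖ ≤ 1) ∧ p = ∫ x in E, divg g x } := by
    refine ⟨fun _ => 0, contDiff_const, ?_, subset_univ _, fun x => by simp, ?_⟩
    · have : tsupport (fun _ : En n => (0 : En n)) = ∅ := by
        simp [tsupport, Function.support]
      rw [HasCompactSupport, this]; exact isCompact_empty
    · simp [divg_zero]
  unfold perimeter relPerimeter
  by_cases hb : BddAbove { p : ℝ | ∃ g : En n → En n, ContDiff ℝ 1 g ∧ HasCompactSupport g ∧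
      tsupport g ⊆ univ ∧ (∀ x, ‖g x‖ ≤ 1) ∧ p = ∫ x in E, divg g x }
  · exact le_csSup hb h0
  · rw [Real.sSup_of_not_bddAbove hb]

lemma deficit_ge_neg_one (E : Set (En n)) : -1 ≤ deficit E := by
  unfold deficit
  rcases eq_or_lt_of_le (perimeter_nonneg (ballOf E)) with h | h
  · rw [← h, div_zero]; norm_num
  · rw [le_div_iff₀ h]
    have := perimeter_nonneg E
    nlinarith

end Aux2
section Aux3

variable {n : ℕ}

/-- The set of admissible test values for the perimeter. -/
def periSet (E : Set (En n)) : Set ℝ :=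
  { p : ℝ | ∃ g : En n → En n, ContDiff ℝ 1 g ∧ HasCompactSupport g ∧
    tsupport g ⊆ univ ∧ (∀ x, ‖g x‖ ≤ 1) ∧ p = ∫ x in E, divg g x }

lemma perimeter_eq_sSup_periSet (E : Set (En n)) : perimeter E = sSup (periSet E) := rfl

lemma setIntegral_divg_affine {c : ℝ} (hc : 0 < c) (v : En n) {E : Set (En n)}
    (hE : MeasurableSet E) {g : En n → En n} (hg : ContDiff ℝ 1 g) :
    ∫ x in (v +ᵥ c • E), divg (fun y => g (c⁻¹ • (y - v))) x
      = (c ^ n * c⁻¹) * ∫ x in E, divg g x := by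
  have h1 : ∀ x, divg (fun y => g (c⁻¹ • (y - v))) x = c⁻¹ * divg g (c⁻¹ • (x - v)) :=
    divg_comp_affine hg hc.ne' v
  calc ∫ x in (v +ᵥ c • E), divg (fun y => g (c⁻¹ • (y - v))) x
      = ∫ x in (v +ᵥ c • E), c⁻¹ * divg g (c⁻¹ • (x - v)) :=
        integral_congr_ae (Filter.Eventually.of_forall fun x => h1 x)
    _ = c⁻¹ * ∫ x in (v +ᵥ c • E), divg g (c⁻¹ • (x - v)) := by
        simp_rw [← smul_eq_mul]; exact integral_smul _ _
    _ = c⁻¹ * (c ^ n * ∫ x in E, divg g x) := by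
        rw [setIntegral_comp_affine hc v hE (continuous_divg hg)]
    _ = (c ^ n * c⁻¹) * ∫ x in E, divg g x := by ring

lemma admissible_comp_affine {c : ℝ} (hc : c ≠ 0) (v : En n) {g : En n → En n}
    (h1 : ContDiff ℝ 1 g) (h2 : HasCompactSupport g) (h4 : ∀ x, ‖g x‖ ≤ 1) :
    ContDiff ℝ 1 (fun y => g (c⁻¹ • (y - v))) ∧
      HasCompactSupport (fun y => g (c⁻¹ • (y - v))) ∧
      (∀ x, ‖g (c⁻¹ • (x - v))‖ ≤ 1) :=
  ⟨h1.comp ((contDiff_id.sub contDiff_const).const_smul c⁻¹),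
    h2.comp_homeomorph ((Homeomorph.subRight v).trans (Homeomorph.smulOfNeZero c⁻¹
      (inv_ne_zero hc))), fun x => h4 _⟩

lemma admissible_comp_affine' {c : ℝ} (hc : c ≠ 0) (v : En n) {g : En n → En n}
    (h1 : ContDiff ℝ 1 g) (h2 : HasCompactSupport g) (h4 : ∀ x, ‖g x‖ ≤ 1) :
    ContDiff ℝ 1 (fun y => g (v + c • y)) ∧
      HasCompactSupport (fun y => g (v + c • y)) ∧
      (∀ x, ‖g (v + c • x)‖ ≤ 1) :=
  ⟨h1.comp (contDiff_const.add (contDiff_id.const_smul c)),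
    h2.comp_homeomorph ((Homeomorph.smulOfNeZero c hc).trans (Homeomorph.addLeft v)),
    fun x => h4 _⟩

lemma periSet_affine (hn : 1 ≤ n) {c : ℝ} (hc : 0 < c) (v : En n) {E : Set (En n)}
    (hE : MeasurableSet E) :
    periSet (v +ᵥ c • E) = c ^ (n - 1) • periSet E := by
  have hcn : c ^ n * c⁻¹ = c ^ (n - 1) := by
    have h : n - 1 + 1 = n := Nat.succ_pred_eq_of_pos hn
    conv_lhs => rw [← h]
    rw [pow_succ, mul_assoc, mul_inv_cancel₀ hc.ne', mul_one]
  ext p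
  constructor
  · rintro ⟨g', h1, h2, _, h4, rfl⟩
    obtain ⟨k1, k2, k4⟩ := admissible_comp_affine' hc.ne' v h1 h2 h4
    have hgg' : g' = fun x => (fun y => g' (v + c • y)) (c⁻¹ • (x - v)) := by
      funext x; simp only [smul_inv_smul₀ hc.ne', add_sub_cancel]
    refine ⟨∫ x in E, divg (fun y => g' (v + c • y)) x,
      ⟨_, k1, k2, subset_univ _, k4, rfl⟩, ?_⟩
    simp only [smul_eq_mul]
    conv_rhs => rw [hgg']
    rw [setIntegral_divg_affine hc v hE k1, hcn]
  · rintro ⟨p, ⟨g, h1, h2, _, h4, rfl⟩, rfl⟩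
    obtain ⟨k1, k2, k4⟩ := admissible_comp_affine hc.ne' v h1 h2 h4
    refine ⟨fun y => g (c⁻¹ • (y - v)), k1, k2, subset_univ _, k4, ?_⟩
    simp only [smul_eq_mul]
    rw [setIntegral_divg_affine hc v hE h1, hcn]

lemma perimeter_affine (hn : 1 ≤ n) {c : ℝ} (hc : 0 < c) (v : En n) {E : Set (En n)}
    (hE : MeasurableSet E) :
    perimeter (v +ᵥ c • E) = c ^ (n - 1) * perimeter E := by
  rw [perimeter_eq_sSup_periSet, perimeter_eq_sSup_periSet, periSet_affine hn hc v hE,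
    Real.sSup_smul_of_nonneg (pow_nonneg hc.le _), smul_eq_mul]

end Aux3
section Aux4

variable {n : ℕ}

lemma volume_unitB_pos (hn : 1 ≤ n) : 0 < volume (unitB n) :=
  measure_ball_pos _ _ one_pos

lemma volume_unitB_lt_top : volume (unitB n) < ⊤ := measure_ball_lt_top

lemma volume_unitB_toReal_pos (hn : 1 ≤ n) : 0 < (volume (unitB n)).toReal :=
  ENNReal.toReal_pos (volume_unitB_pos hn).ne' volume_unitB_lt_top.ne

lemma ballRadius_pos (hn : 1 ≤ n) {E : Set (En n)} (hE : Sn E) : 0 < ballRadius E := by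
  apply Real.rpow_pos_of_pos
  exact div_pos (ENNReal.toReal_pos hE.2.1.ne' hE.2.2.ne) (volume_unitB_toReal_pos hn)

lemma vol_ballOf (hn : 1 ≤ n) {E : Set (En n)} (hE : Sn E) :
    volume (ballOf E) = volume E := by
  have hr := ballRadius_pos hn hE
  have hq : (0:ℝ) < (volume E).toReal / (volume (unitB n)).toReal :=
    div_pos (ENNReal.toReal_pos hE.2.1.ne' hE.2.2.ne) (volume_unitB_toReal_pos hn)
  rw [ballOf, Measure.addHaar_ball_of_pos _ _ hr, finrank_euclideanSpace_fin]
  have hpow : ballRadius E ^ n = (volume E).toReal / (volume (unitB n)).toReal := by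
    rw [ballRadius, ← Real.rpow_natCast ((_ / _) ^ ((n:ℝ)⁻¹)) n, ← Real.rpow_mul hq.le,
      inv_mul_cancel₀ (by exact_mod_cast (by omega : n ≠ 0)), Real.rpow_one]
  rw [hpow, ENNReal.ofReal_div_of_pos (volume_unitB_toReal_pos hn),
    ENNReal.ofReal_toReal hE.2.2.ne, ENNReal.ofReal_toReal volume_unitB_lt_top.ne]
  exact ENNReal.div_mul_cancel (volume_unitB_pos hn).ne' volume_unitB_lt_top.ne

lemma vol_ballOf_pos (hn : 1 ≤ n) {E : Set (En n)} (hE : Sn E) :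
    0 < (volume (ballOf E)).toReal := by
  rw [vol_ballOf hn hE]
  exact ENNReal.toReal_pos hE.2.1.ne' hE.2.2.ne

lemma asym_nonneg (E : Set (En n)) : 0 ≤ asym E :=
  Real.iInf_nonneg fun x => div_nonneg ENNReal.toReal_nonneg ENNReal.toReal_nonneg

lemma asym_bddBelow (E : Set (En n)) : BddBelow (range fun x : En n =>
    (volume (E ∆ (x +ᵥ ballOf E))).toReal / (volume (ballOf E)).toReal) := by
  refine ⟨0, ?_⟩
  rintro p ⟨x, rfl⟩
  exact div_nonneg ENNReal.toReal_nonneg ENNReal.toReal_nonneg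

lemma asym_le_two (hn : 1 ≤ n) {E : Set (En n)} (hE : Sn E) : asym E ≤ 2 := by
  have h0 : asym E ≤ (volume (E ∆ ((0:En n) +ᵥ ballOf E))).toReal /
      (volume (ballOf E)).toReal := ciInf_le (asym_bddBelow E) 0
  refine h0.trans ?_
  rw [zero_vadd]
  rw [div_le_iff₀ (vol_ballOf_pos hn hE)]
  have hbe : volume (ballOf E) = volume E := vol_ballOf hn hE
  have hsub : volume (E ∆ ballOf E) ≤ volume E + volume (ballOf E) :=
    le_trans (measure_mono symmDiff_subset_union) (measure_union_le _ _)
  rw [hbe] at hsub ⊢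
  have hfin : volume E + volume E ≠ ⊤ := (ENNReal.add_lt_top.2 ⟨hE.2.2, hE.2.2⟩).ne
  have := ENNReal.toReal_mono hfin hsub
  rw [ENNReal.toReal_add hE.2.2.ne hE.2.2.ne] at this
  linarith

end Aux4
section Aux5

variable {n : ℕ}

lemma vol_smul (c : ℝ) (A : Set (En n)) :
    volume (c • A) = ENNReal.ofReal (|c| ^ n) * volume A := by
  have := vol_affine c (0 : En n) A
  rwa [zero_vadd] at this

lemma ballRadius_affine (hn : 1 ≤ n) {c : ℝ} (hc : 0 < c) (v : En n) (E : Set (En n)) :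
    ballRadius (v +ᵥ c • E) = c * ballRadius E := by
  unfold ballRadius
  rw [vol_affine, abs_of_pos hc, ENNReal.toReal_mul, ENNReal.toReal_ofReal
    (pow_nonneg hc.le n), mul_div_assoc,
    Real.mul_rpow (pow_nonneg hc.le n) (div_nonneg ENNReal.toReal_nonneg
      ENNReal.toReal_nonneg), ← Real.rpow_natCast c n, ← Real.rpow_mul hc.le,
    mul_inv_cancel₀ (by exact_mod_cast (by omega : n ≠ 0)), Real.rpow_one]

lemma ballOf_affine (hn : 1 ≤ n) {c : ℝ} (hc : 0 < c) (v : En n) (E : Set (En n)) :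
    ballOf (v +ᵥ c • E) = c • ballOf E := by
  unfold ballOf
  rw [ballRadius_affine hn hc v E, _root_.smul_ball hc.ne', smul_zero, Real.norm_eq_abs,
    abs_of_pos hc]

lemma smul_set_vadd' (c : ℝ) (y : En n) (B : Set (En n)) :
    c • (y +ᵥ B) = c • y +ᵥ c • B := by
  rw [← Set.image_smul, ← Set.image_vadd, ← Set.image_vadd, ← Set.image_smul,
    Set.image_image, Set.image_image]
  exact Set.image_congr fun b _ => by simp [smul_add, vadd_eq_add]

lemma Sn_affine {c : ℝ} (hc : 0 < c) (v : En n) {E : Set (En n)} (hE : Sn E) :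
    Sn (v +ᵥ c • E) := by
  refine ⟨?_, ?_, ?_⟩
  · rw [← psi_preimage hc.ne' v E]
    exact ((continuous_id.sub continuous_const).const_smul c⁻¹).measurable hE.1
  · rw [vol_affine]
    exact ENNReal.mul_pos (ENNReal.ofReal_pos.2 (pow_pos (abs_pos.2 hc.ne') n)).ne' hE.2.1.ne'
  · rw [vol_affine]
    exact ENNReal.mul_lt_top ENNReal.ofReal_lt_top hE.2.2

lemma asym_affine (hn : 1 ≤ n) {c : ℝ} (hc : 0 < c) (v : En n) (E : Set (En n)) :
    asym (v +ᵥ c • E) = asym E := by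
  have hφ : Function.Surjective (fun y : En n => v + c • y) := fun x =>
    ⟨c⁻¹ • (x - v), by simp [smul_inv_smul₀ hc.ne']⟩
  unfold asym
  rw [iInf, ← hφ.range_comp]
  congr 1
  apply congrArg
  funext y
  have hB : ballOf (v +ᵥ c • E) = c • ballOf E := ballOf_affine hn hc v E
  have hnum : (v +ᵥ c • E) ∆ ((v + c • y) +ᵥ ballOf (v +ᵥ c • E))
      = v +ᵥ c • (E ∆ (y +ᵥ ballOf E)) := by
    rw [hB, ← vadd_vadd, ← smul_set_vadd' c y (ballOf E)]
    rw [vadd_smul_image, vadd_smul_image, vadd_smul_image]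
    refine (Set.image_symmDiff ?_ _ _).symm
    intro a b hab
    simp only [add_right_inj] at hab
    exact smul_right_injective (En n) hc.ne' hab
  show (volume ((v +ᵥ c • E) ∆ ((v + c • y) +ᵥ ballOf (v +ᵥ c • E)))).toReal /
      (volume (ballOf (v +ᵥ c • E))).toReal = _
  rw [hnum, hB, vol_affine, vol_smul, ENNReal.toReal_mul, ENNReal.toReal_mul,
    ENNReal.toReal_ofReal (pow_nonneg (abs_nonneg c) n),
    mul_div_mul_left _ _ (pow_ne_zero n (abs_ne_zero.2 hc.ne'))]

lemma deficit_affine (hn : 1 ≤ n) {c : ℝ} (hc : 0 < c) (v : En n) {E : Set (En n)}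
    (hE : Sn E) : deficit (v +ᵥ c • E) = deficit E := by
  have hB : ballOf (v +ᵥ c • E) = (0:En n) +ᵥ c • ballOf E := by
    rw [zero_vadd]; exact ballOf_affine hn hc v E
  unfold deficit
  rw [perimeter_affine hn hc v hE.1, hB, perimeter_affine hn hc 0 (by unfold ballOf; exact measurableSet_ball : MeasurableSet (ballOf E)),
    ← mul_sub, mul_div_mul_left _ _ (ne_of_gt (pow_pos hc _))]

lemma qpos_affine (hn : 1 ≤ n) {c : ℝ} (hc : 0 < c) (v : En n) {E : Set (En n)}
    (hE : Sn E) : ∀ m, Qpos n m (v +ᵥ c • E) = Qpos n m E := by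
  intro m
  induction m with
  | zero => rfl
  | succ k ih =>
    cases k with
    | zero =>
      show deficit _ / asym _ = deficit _ / asym _
      rw [deficit_affine hn hc v hE, asym_affine hn hc v E]
    | succ l =>
      show (Qpos n (l+1) _ - _) / asym _ = (Qpos n (l+1) _ - _) / asym _
      rw [ih, asym_affine hn hc v E]

end Aux5
section Aux6

variable {n : ℕ}

lemma div_le_div_same' {a b c : ℝ} (h : a ≤ b) (hc : 0 < c) : a / c ≤ b / c := by
  apply div_le_div_of_nonneg_right h hc.le

lemma qpos_lb (hn : 1 ≤ n) : ∀ m : ℕ, ∃ M : ℝ, 0 < M ∧ ∀ E : Set (En n), Sn E →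
    0 < asym E → -M / asym E ^ m ≤ Qpos n m E := by
  intro m
  induction m with
  | zero =>
    exact ⟨1, one_pos, fun E _ _ => by norm_num [Qpos]⟩
  | succ k ih =>
    cases k with
    | zero =>
      refine ⟨1, one_pos, fun E hE ha => ?_⟩
      show -1 / asym E ^ 1 ≤ deficit E / asym E
      rw [pow_one]
      exact div_le_div_same' (deficit_ge_neg_one E) ha
    | succ l =>
      obtain ⟨M, hM, hMle⟩ := ih
      set c : ℝ := (QBof (Qpos n (l + 1))).toReal with hcdef
      refine ⟨M + 2 ^ (l + 1) * (|c| + 1), by positivity, fun E hE ha => ?_⟩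
      have h2 : asym E ≤ 2 := asym_le_two hn hE
      have hq : Qpos n (l + 2) E = (Qpos n (l + 1) E - c) / asym E := rfl
      rw [hq]
      have hstep : -(M + 2 ^ (l + 1) * (|c| + 1)) / asym E ^ (l + 1) ≤
          Qpos n (l + 1) E - c := by
        have h1 : -M / asym E ^ (l + 1) ≤ Qpos n (l + 1) E := hMle E hE ha
        have hpow : 0 < asym E ^ (l + 1) := pow_pos ha _
        have hpow2 : asym E ^ (l + 1) ≤ 2 ^ (l + 1) := pow_le_pow_left₀ ha.le h2 _
        have hc1 : c ≤ (|c| + 1) * (2 ^ (l + 1) / asym E ^ (l + 1)) := by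
          have h3 : (1:ℝ) ≤ 2 ^ (l + 1) / asym E ^ (l + 1) := (one_le_div hpow).2 hpow2
          nlinarith [le_abs_self c, abs_nonneg c]
        have heq : -(M + 2 ^ (l + 1) * (|c| + 1)) / asym E ^ (l + 1)
            = -M / asym E ^ (l + 1) - (|c| + 1) * (2 ^ (l + 1) / asym E ^ (l + 1)) := by
          field_simp
          ring
        rw [heq]
        linarith
      calc -(M + 2 ^ (l + 1) * (|c| + 1)) / asym E ^ (l + 2)
          = (-(M + 2 ^ (l + 1) * (|c| + 1)) / asym E ^ (l + 1)) / asym E := by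
            rw [div_div, ← pow_succ]
        _ ≤ (Qpos n (l + 1) E - c) / asym E := div_le_div_same' hstep ha

end Aux6
section Aux7

variable {n : ℕ}

lemma vadd_smul_symmDiff {c : ℝ} (hc : c ≠ 0) (v : En n) (A B : Set (En n)) :
    (v +ᵥ c • A) ∆ (v +ᵥ c • B) = v +ᵥ c • (A ∆ B) := by
  rw [vadd_smul_image, vadd_smul_image, vadd_smul_image]
  refine (Set.image_symmDiff ?_ _ _).symm
  intro a b hab
  simp only [add_right_inj] at hab
  exact smul_right_injective (En n) hc hab

lemma vol_ballOf_eq (hn : 1 ≤ n) {E : Set (En n)} (hE : Sn E) :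
    volume (ballOf E) = ENNReal.ofReal (ballRadius E ^ n) * volume (unitB n) := by
  unfold ballOf
  rw [Measure.addHaar_ball_of_pos _ _ (ballRadius_pos hn hE), finrank_euclideanSpace_fin]
  rfl

end Aux7
/-- Uniform lower bound for `Q^(m)` when `Q^(m)(B) > -∞`. -/
theorem Qm_lower_bound (n m : ℕ) (hn : 2 ≤ n) (hm : 2 ≤ m)
    (hQk : ∀ k, 1 ≤ k → k ≤ m - 1 → QB n k ≠ ⊤ ∧ QB n k ≠ ⊥)
    (hQm : QB n m ≠ ⊥) :
    ∃ lam : ℝ, ∀ E : Set (En n), Sn E → (lam : EReal) ≤ Qfull m E := by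
  by_contra hcon
  push_neg at hcon
  have hn1 : 1 ≤ n := le_trans (by norm_num) hn
  obtain ⟨M, hM, hMle⟩ := qpos_lb (n := n) hn1 m
  -- a real lower bound for QB n m
  obtain ⟨lam0, hlam0⟩ : ∃ lam0 : ℝ, (lam0 : EReal) ≤ QB n m := by
    by_cases hT : QB n m = ⊤
    · exact ⟨0, hT ▸ le_top⟩
    · exact ⟨(QB n m).toReal, le_of_eq (EReal.coe_toReal hT hQm)⟩
  choose Efun hSn hQlt using fun j : ℕ => hcon (min lam0 (-(j:ℝ)))
  have hasym : ∀ j, 0 < asym (Efun j) := by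
    intro j
    by_contra h0
    have hEq : Qfull m (Efun j) = QB n m := by
      unfold Qfull; rw [if_neg h0]
    have h1 : ((min lam0 (-(j:ℝ)) : ℝ) : EReal) ≤ QB n m := by
      refine le_trans ?_ hlam0
      exact_mod_cast EReal.coe_le_coe_iff.2 (min_le_left _ _)
    have h2 := hQlt j
    rw [hEq] at h2
    exact absurd h2 (not_lt.2 h1)
  have hQreal : ∀ j, Qpos n m (Efun j) < -(j:ℝ) := by
    intro j
    have h1 := hQlt j
    unfold Qfull at h1
    rw [if_pos (hasym j)] at h1
    have h2 : Qpos n m (Efun j) < min lam0 (-(j:ℝ)) := EReal.coe_lt_coe_iff.1 h1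
    exact lt_of_lt_of_le h2 (min_le_right _ _)
  -- asymmetries tend to 0
  have hα0 : Tendsto (fun j => asym (Efun j)) atTop (𝓝 0) := by
    rw [Metric.tendsto_atTop]
    intro ε hε
    rcases le_or_gt ε 2 with hε2 | hε2
    · obtain ⟨N, hN⟩ := exists_nat_gt (M / ε ^ m)
      refine ⟨N, fun j hj => ?_⟩
      rw [Real.dist_eq, sub_zero, abs_of_nonneg (asym_nonneg _)]
      by_contra hcontra
      push_neg at hcontra
      have h1 : ε ^ m ≤ asym (Efun j) ^ m := pow_le_pow_left₀ hε.le hcontra m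
      have h2 : -M / asym (Efun j) ^ m ≤ Qpos n m (Efun j) := hMle _ (hSn j) (hasym j)
      have hpow : 0 < asym (Efun j) ^ m := pow_pos (hasym j) m
      have hεpow : 0 < ε ^ m := pow_pos hε m
      have h4 : (j:ℝ) < M / asym (Efun j) ^ m := by
        have h5 := lt_of_le_of_lt h2 (hQreal j)
        rw [neg_div] at h5
        linarith
      have h5 : M / asym (Efun j) ^ m ≤ M / ε ^ m :=
        div_le_div_of_nonneg_left hM.le hεpow h1
      have h6 : (N:ℝ) ≤ (j:ℝ) := Nat.cast_le.2 hj
      linarith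
    · refine ⟨0, fun j _ => ?_⟩
      rw [Real.dist_eq, sub_zero, abs_of_nonneg (asym_nonneg _)]
      exact lt_of_le_of_lt (asym_le_two hn1 (hSn j)) hε2
  -- nearly optimal centers
  have hx : ∀ j : ℕ, ∃ x : En n, (volume (Efun j ∆ (x +ᵥ ballOf (Efun j)))).toReal /
      (volume (ballOf (Efun j))).toReal < asym (Efun j) + 1/((j:ℝ)+1) := by
    intro j
    apply exists_lt_of_ciInf_lt
    have hp : (0:ℝ) < 1/((j:ℝ)+1) := by positivity
    show asym (Efun j) < _
    linarith
  choose xc hxc using hx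
  -- the rescaled translated sequence
  have hr : ∀ j, 0 < ballRadius (Efun j) := fun j => ballRadius_pos hn1 (hSn j)
  have hrinv : ∀ j, 0 < (ballRadius (Efun j))⁻¹ := fun j => inv_pos.2 (hr j)
  set F : ℕ → Set (En n) := fun j =>
    (-((ballRadius (Efun j))⁻¹ • xc j)) +ᵥ (ballRadius (Efun j))⁻¹ • Efun j with hFdef
  have hSnF : ∀ j, Sn (F j) := fun j => Sn_affine (hrinv j) _ (hSn j)
  have hasymF : ∀ j, asym (F j) = asym (Efun j) := fun j => asym_affine hn1 (hrinv j) _ _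
  have hQF : ∀ j, Qpos n m (F j) = Qpos n m (Efun j) := fun j =>
    qpos_affine hn1 (hrinv j) _ (hSn j) m
  have hvolF : ∀ j, volume (F j) = volume (unitB n) := by
    intro j
    rw [hFdef]
    rw [vol_affine]
    have h1 : volume (Efun j) =
        ENNReal.ofReal (ballRadius (Efun j) ^ n) * volume (unitB n) := by
      rw [← vol_ballOf hn1 (hSn j)]
      exact vol_ballOf_eq hn1 (hSn j)
    rw [h1, ← mul_assoc, ← ENNReal.ofReal_mul (by positivity),
      abs_of_pos (hrinv j), inv_pow, inv_mul_cancel₀ (pow_ne_zero n (hr j).ne'),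
      ENNReal.ofReal_one, one_mul]
  -- symmetric difference with the unit ball
  have hsdeq : ∀ j, F j ∆ unitB n = (-((ballRadius (Efun j))⁻¹ • xc j)) +ᵥ
      (ballRadius (Efun j))⁻¹ • (Efun j ∆ (xc j +ᵥ ballOf (Efun j))) := by
    intro j
    have hB : unitB n = (-((ballRadius (Efun j))⁻¹ • xc j)) +ᵥ
        (ballRadius (Efun j))⁻¹ • (xc j +ᵥ ballOf (Efun j)) := by
      rw [smul_set_vadd', vadd_vadd, neg_add_cancel]
      show unitB n = (0:En n) +ᵥ (ballRadius (Efun j))⁻¹ • ballOf (Efun j)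
      rw [zero_vadd]
      unfold ballOf
      rw [_root_.smul_ball (hrinv j).ne', smul_zero, Real.norm_eq_abs,
        abs_of_pos (hrinv j), inv_mul_cancel₀ (hr j).ne']
      rfl
    conv_lhs => rw [hB, hFdef]
    exact vadd_smul_symmDiff (hrinv j).ne' _ _ _
  have hsd : ∀ j, volume (F j ∆ unitB n) ≤
      ENNReal.ofReal ((asym (Efun j) + 1/((j:ℝ)+1)) * (volume (unitB n)).toReal) := by
    intro j
    rw [hsdeq j, vol_affine, abs_of_pos (hrinv j)]
    have hne : volume (Efun j ∆ (xc j +ᵥ ballOf (Efun j))) ≠ ⊤ := by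
      refine ne_of_lt (lt_of_le_of_lt (le_trans (measure_mono symmDiff_subset_union)
        (measure_union_le _ _)) ?_)
      rw [measure_vadd, vol_ballOf hn1 (hSn j)]
      exact ENNReal.add_lt_top.2 ⟨(hSn j).2.2, (hSn j).2.2⟩
    have hlt : (volume (Efun j ∆ (xc j +ᵥ ballOf (Efun j)))).toReal <
        (asym (Efun j) + 1/((j:ℝ)+1)) * (volume (ballOf (Efun j))).toReal := by
      have := hxc j
      rw [div_lt_iff₀ (vol_ballOf_pos hn1 (hSn j))] at this
      exact this
    have hVle : volume (Efun j ∆ (xc j +ᵥ ballOf (Efun j))) ≤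
        ENNReal.ofReal ((asym (Efun j) + 1/((j:ℝ)+1)) * (volume (ballOf (Efun j))).toReal) := by
      rw [ENNReal.le_ofReal_iff_toReal_le hne (mul_nonneg (add_nonneg (asym_nonneg _) (by positivity)) ENNReal.toReal_nonneg)]
      exact hlt.le
    calc ENNReal.ofReal ((ballRadius (Efun j))⁻¹ ^ n) *
          volume (Efun j ∆ (xc j +ᵥ ballOf (Efun j)))
        ≤ ENNReal.ofReal ((ballRadius (Efun j))⁻¹ ^ n) *
          ENNReal.ofReal ((asym (Efun j) + 1/((j:ℝ)+1)) *
            (volume (ballOf (Efun j))).toReal) := by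
          exact mul_le_mul_right hVle _
      _ = ENNReal.ofReal ((asym (Efun j) + 1/((j:ℝ)+1)) * (volume (unitB n)).toReal) := by
          rw [← ENNReal.ofReal_mul (pow_nonneg (hrinv j).le n)]
          congr 1
          rw [vol_ballOf_eq hn1 (hSn j), ENNReal.toReal_mul,
            ENNReal.toReal_ofReal (pow_nonneg (hr j).le n)]
          have hcr : (ballRadius (Efun j))⁻¹ ^ n * ballRadius (Efun j) ^ n = 1 := by
            rw [inv_pow, inv_mul_cancel₀ (pow_ne_zero n (hr j).ne')]
          linear_combination (asym (Efun j) + 1/((j:ℝ)+1)) * (volume (unitB n)).toReal * hcr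
  have htend : Tendsto (fun j => volume (F j ∆ unitB n)) atTop (𝓝 0) := by
    have hup : Tendsto (fun j => ENNReal.ofReal ((asym (Efun j) + 1/((j:ℝ)+1)) *
        (volume (unitB n)).toReal)) atTop (𝓝 0) := by
      have hreal : Tendsto (fun j => (asym (Efun j) + 1/((j:ℝ)+1)) *
          (volume (unitB n)).toReal) atTop (𝓝 0) := by
        have := (hα0.add tendsto_one_div_add_atTop_nhds_zero_nat).mul_const
          (volume (unitB n)).toReal
        simpa using this
      have := ENNReal.tendsto_ofReal hreal
      simpa using this
    exact tendsto_of_tendsto_of_tendsto_of_le_of_le tendsto_const_nhds hup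
      (fun j => zero_le) hsd
  -- the liminf along `F` is `⊥`
  have hlim : Filter.liminf (fun k => ((Qpos n m (F k) : ℝ) : EReal)) atTop = ⊥ := by
    have htb : Tendsto (fun k : ℕ => ((Qpos n m (F k) : ℝ) : EReal)) atTop (𝓝 ⊥) := by
      rw [EReal.tendsto_nhds_bot_iff_real]
      intro x
      obtain ⟨N, hN⟩ := exists_nat_gt (-x)
      filter_upwards [eventually_ge_atTop N] with k hk
      have h1 : Qpos n m (F k) < -(k:ℝ) := by rw [hQF k]; exact hQreal k
      have h2 : -(k:ℝ) ≤ -(N:ℝ) := neg_le_neg (Nat.cast_le.2 hk)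
      have h3 : Qpos n m (F k) < x := by linarith
      exact_mod_cast EReal.coe_lt_coe_iff.2 h3
    exact htb.liminf_eq
  have hbot : QB n m ≤ ⊥ := by
    unfold QB QBof
    refine sInf_le ?_
    exact ⟨F, fun k => ⟨hSnF k, hvolF k, by rw [hasymF k]; exact hasym k⟩, htend, hlim.symm⟩
  exact hQm (le_bot_iff.1 hbot)

end
end

section
/- Let k ≥ 3 be an integer, 0 < ρ₁ < ρ₂, and let θ_k : [ρ₁, ρ₂] → ℝ be differentiable. Define θ₂ = (k/2)·θ_k. Then 4 ∫_{ρ₁}^{ρ₂} √(1 + ρ² θ₂'(ρ)²) dρ < 2k ∫_{ρ₁}^{ρ₂} √(1 + ρ² θ_k'(ρ)²) dρ, provided the right-hand side is finite; i.e. the perimeter of the annularly symmetrized set, computed in polar coordinates via the angular profile θ₂ = (k/2)θ_k, is strictly smaller than the perimeter of the original k-fold symmetric set. -/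
open MeasureTheory Metric Set Filter Topology
open scoped Pointwise symmDiff ENNReal RealInnerProductSpace NNReal

noncomputable section

/-- The annular symmetrization strictly decreases the perimeter: comparison of the polar
length integrals for the angular profiles `θ₂ = (k/2)·θ_k`, `k ≥ 3`. -/
theorem annular_symmetrization_perimeter_inequality (k : ℕ) (hk : 3 ≤ k) (ρ₁ ρ₂ : ℝ)
    (h1 : 0 < ρ₁) (h12 : ρ₁ < ρ₂) (θ : ℝ → ℝ)
    (hθ : ∀ ρ ∈ Set.Icc ρ₁ ρ₂, DifferentiableAt ℝ θ ρ)
    (hint : IntervalIntegrable (fun ρ => Real.sqrt (1 + ρ ^ 2 * deriv θ ρ ^ 2)) volume ρ₁ ρ₂) :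
    4 * ∫ ρ in ρ₁..ρ₂, Real.sqrt (1 + ρ ^ 2 * deriv (fun t => (k : ℝ) / 2 * θ t) ρ ^ 2) <
      2 * (k : ℝ) * ∫ ρ in ρ₁..ρ₂, Real.sqrt (1 + ρ ^ 2 * deriv θ ρ ^ 2) := by
  set c : ℝ := (k : ℝ) / 2 with hc
  have hk3 : (3 : ℝ) ≤ (k : ℝ) := by exact_mod_cast hk
  have hc1 : 1 < c := by rw [hc]; linarith
  have hc0 : 0 < c := by linarith
  set f : ℝ → ℝ := fun ρ => Real.sqrt (1 + ρ ^ 2 * deriv θ ρ ^ 2) with hf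
  set g : ℝ → ℝ := fun ρ => Real.sqrt (1 + ρ ^ 2 * (c * deriv θ ρ) ^ 2) with hg
  have hderiv : ∀ ρ : ℝ, deriv (fun t => c * θ t) ρ = c * deriv θ ρ := fun ρ =>
    deriv_const_mul_field c
  have key : ∀ ρ : ℝ, g ρ < c * f ρ := by
    intro ρ
    have hx : (0 : ℝ) ≤ ρ ^ 2 * deriv θ ρ ^ 2 := by positivity
    have h1 : 1 + ρ ^ 2 * (c * deriv θ ρ) ^ 2 < c ^ 2 * (1 + ρ ^ 2 * deriv θ ρ ^ 2) := by
      nlinarith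
    calc g ρ < Real.sqrt (c ^ 2 * (1 + ρ ^ 2 * deriv θ ρ ^ 2)) :=
          Real.sqrt_lt_sqrt (by positivity) h1
      _ = c * f ρ := by
          rw [Real.sqrt_mul (by positivity), Real.sqrt_sq hc0.le]
  have hgnn : ∀ ρ : ℝ, 0 ≤ g ρ := fun ρ => Real.sqrt_nonneg _
  have hfnn : ∀ ρ : ℝ, 0 ≤ f ρ := fun ρ => Real.sqrt_nonneg _
  -- integrability of `c • f`
  have hcf : IntervalIntegrable (fun ρ => c * f ρ) volume ρ₁ ρ₂ := hint.const_mul c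
  -- measurability of `g`
  have hgm : AEStronglyMeasurable g (volume.restrict (Set.uIoc ρ₁ ρ₂)) := by
    have : Measurable g := by
      apply Real.continuous_sqrt.measurable.comp
      exact (measurable_const.add
        (((measurable_id.pow_const 2)).mul
          (((measurable_deriv θ).const_mul c).pow_const 2)))
    exact this.aestronglyMeasurable
  have hgint : IntervalIntegrable g volume ρ₁ ρ₂ := by
    apply hcf.mono_fun hgm
    filter_upwards with ρ
    rw [Real.norm_of_nonneg (hgnn ρ), Real.norm_of_nonneg (by positivity : 0 ≤ c * f ρ)]
    exact (key ρ).le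
  -- strict inequality of integrals
  have hdiff : IntervalIntegrable (fun ρ => c * f ρ - g ρ) volume ρ₁ ρ₂ := hcf.sub hgint
  have hIoc : IntegrableOn (fun ρ => c * f ρ - g ρ) (Set.Ioc ρ₁ ρ₂) volume := by
    exact hdiff.1
  have hpos : 0 < ∫ ρ in Set.Ioc ρ₁ ρ₂, (c * f ρ - g ρ) := by
    rw [setIntegral_pos_iff_support_of_nonneg_ae ?_ hIoc]
    · have hsup : Function.support (fun ρ => c * f ρ - g ρ) = Set.univ := by
        ext ρ; simp [Function.mem_support, sub_ne_zero, (key ρ).ne']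
      rw [hsup, Set.univ_inter, Real.volume_Ioc]
      simp [h12]
    · filter_upwards with ρ
      exact sub_nonneg.mpr (key ρ).le
  have hint_lt : ∫ ρ in ρ₁..ρ₂, g ρ < c * ∫ ρ in ρ₁..ρ₂, f ρ := by
    have h1 : ∫ ρ in ρ₁..ρ₂, (c * f ρ - g ρ) =
        (∫ ρ in ρ₁..ρ₂, c * f ρ) - ∫ ρ in ρ₁..ρ₂, g ρ :=
      intervalIntegral.integral_sub hcf hgint
    have h2 : ∫ ρ in ρ₁..ρ₂, c * f ρ = c * ∫ ρ in ρ₁..ρ₂, f ρ :=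
      intervalIntegral.integral_const_mul c f
    have h3 : ∫ ρ in ρ₁..ρ₂, (c * f ρ - g ρ) = ∫ ρ in Set.Ioc ρ₁ ρ₂, (c * f ρ - g ρ) :=
      intervalIntegral.integral_of_le h12.le
    rw [h3] at h1
    linarith
  have hgoal : (∫ ρ in ρ₁..ρ₂, Real.sqrt (1 + ρ ^ 2 * deriv (fun t => (k : ℝ) / 2 * θ t) ρ ^ 2)) =
      ∫ ρ in ρ₁..ρ₂, g ρ := by
    apply intervalIntegral.integral_congr
    intro ρ _
    rw [hg]
    simp only [← hc, hderiv ρ]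
  rw [hgoal]
  have h2k : 2 * (k : ℝ) = 4 * c := by rw [hc]; ring
  rw [h2k, mul_assoc]
  have : (0:ℝ) < 4 := by norm_num
  exact (mul_lt_mul_iff_right₀ this).mpr hint_lt

end
end
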